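/- arXiv:2405.05859 — 2 statements merged into one kernel-verified Lean document; each statement's English description precedes it below -/
import Mathlib

section
/- Let P be a finite-dimensional Poisson algebra of dimension n over an algebraically closed field, with both products nonzero (non-trivial). If P has a maximal subalgebra B which is abelian, then the derived subalgebra P^1) = P·P + [P,P] is contained in B, P is solvable, and P^2) = 0 (P is 2-step solvable). -/
variable {F : Type*} [Field F] {P : Type*} [AddCommGroup P] [Module F P]

/-- A subalgebra of a dialgebra (subspace closed under both products). -/
def IsSubalg (mul br : P →ₗ[F] P →ₗ[F] P) (A : Submodule F P) : Prop :=
  ∀ x ∈ A, ∀ y ∈ A, mul x y ∈ A ∧ br x y ∈ A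

/-- An ideal of a dialgebra. -/
def IsIdeal (mul br : P →ₗ[F] P →ₗ[F] P) (A : Submodule F P) : Prop :=
  ∀ x ∈ A, ∀ y : P, mul x y ∈ A ∧ mul y x ∈ A ∧ br x y ∈ A ∧ br y x ∈ A

/-- An abelian subspace: all products of its elements vanish. -/
def IsAbelian (mul br : P →ₗ[F] P →ₗ[F] P) (A : Submodule F P) : Prop :=
  ∀ x ∈ A, ∀ y ∈ A, mul x y = 0 ∧ br x y = 0

/-- span of all products `f a b` with `a ∈ A`, `b ∈ B`. -/
def prodSpan (f : P →ₗ[F] P →ₗ[F] P) (A B : Submodule F P) : Submodule F P :=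
  Submodule.span F {z | ∃ a ∈ A, ∃ b ∈ B, z = f a b}

/-- Derived series of a dialgebra: `P^0) = P`,
`P^(k+1)) = P^k)·P^k) + [P^k),P^k)]`. -/
def derSeries (mul br : P →ₗ[F] P →ₗ[F] P) : ℕ → Submodule F P
  | 0 => ⊤
  | (k + 1) => prodSpan mul (derSeries mul br k) (derSeries mul br k) ⊔
      prodSpan br (derSeries mul br k) (derSeries mul br k)

/-!
The idealizer `N = {p | B·p ⊆ B, [B,p] ⊆ B}` of `B` is a subalgebra containing `B`, so by
maximality either `N = B` or `B` is an ideal. In both cases a commuting family of operators on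
`P/B` has a common eigenvector `v + B`, and `B + Fv` turns out to be a subalgebra, hence all of `P`.

* If `N = B`, the family is `x ↦ b·x`, `x ↦ [x,b]` for `b ∈ B`. As `b·(b·x) = 0`, the first
  operators have eigenvalue `0`; as `v ∉ N`, some `[v,b₀] ≡ λv` with `λ ≠ 0`. The Leibniz rule
  then gives `B·v = 0` and `v·v = 0`, so the product vanishes on `P = B + Fv`: excluded.
* If `B` is an ideal, the family is `x ↦ p·x` for `p ∈ P`, which gives `v·v ≡ cv`. If `c ≠ 0`,
  the Leibniz rule for `[v·v, b]` forces `[v,B] = 0`, so the bracket vanishes: excluded. Hence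
  `c = 0` and every product of elements of `P = B + Fv` lies in `B`.

So `P^1) ⊆ B`, and then `P^2) ⊆ B·B + [B,B] = 0`.
-/

section CommonEigenvector

variable {K V : Type*} [Field K] [IsAlgClosed K] [AddCommGroup V] [Module K V]
  [FiniteDimensional K V]

lemma exists_common_eigenvector_mem (S : Set (Module.End K V))
    (hS : ∀ f ∈ S, ∀ g ∈ S, Commute f g) (W : Submodule K V) (hW : W ≠ ⊥)
    (hWS : ∀ f ∈ S, ∀ w ∈ W, f w ∈ W) :
    ∃ v ∈ W, v ≠ 0 ∧ ∀ f ∈ S, ∃ μ : K, f v = μ • v := by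
  induction hn : Module.finrank K W using Nat.strong_induction_on generalizing W with
  | _ n ih =>
  by_cases hsplit : ∃ f ∈ S, ∃ μ : K, W ⊓ f.eigenspace μ ≠ ⊥ ∧ ¬W ≤ f.eigenspace μ
  · -- an eigenspace cutting `W` properly is `S`-invariant, and smaller
    obtain ⟨f, hf, μ, hne, hnle⟩ := hsplit
    have hlt : W ⊓ f.eigenspace μ < W :=
      inf_le_left.lt_of_ne fun h => hnle (h ▸ inf_le_right)
    have hinv : ∀ g ∈ S, ∀ w ∈ W ⊓ f.eigenspace μ, g w ∈ W ⊓ f.eigenspace μ := by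
      rintro g hg w ⟨hwW, hwf⟩
      replace hwf := Module.End.mem_eigenspace_iff.mp hwf
      refine ⟨hWS g hg w hwW, Module.End.mem_eigenspace_iff.mpr ?_⟩
      rw [← Module.End.mul_apply, hS f hf g hg, Module.End.mul_apply, hwf, map_smul]
    obtain ⟨v, hv, hv0, hvS⟩ :=
      ih _ (hn ▸ Submodule.finrank_lt_finrank_of_lt hlt) _ hne hinv rfl
    exact ⟨v, hv.1, hv0, hvS⟩
  · -- otherwise every `f ∈ S` acts on `W` by a scalar
    push Not at hsplit
    obtain ⟨v, hvW, hv0⟩ := (Submodule.ne_bot_iff W).mp hW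
    refine ⟨v, hvW, hv0, fun f hf => ?_⟩
    have : Nontrivial W := Submodule.nontrivial_iff_ne_bot.mpr hW
    obtain ⟨μ, hμ⟩ := Module.End.exists_eigenvalue (f.restrict (hWS f hf))
    obtain ⟨w, hw⟩ := hμ.exists_hasEigenvector
    have hfw : f w = μ • (w : V) := by simpa using congrArg Subtype.val hw.apply_eq_smul
    have hne : W ⊓ f.eigenspace μ ≠ ⊥ :=
      (Submodule.ne_bot_iff _).mpr ⟨w, ⟨w.2, Module.End.mem_eigenspace_iff.mpr hfw⟩,
        by simpa using hw.2⟩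
    exact ⟨μ, Module.End.mem_eigenspace_iff.mp (hsplit f hf μ hne hvW)⟩

lemma exists_notMem_forall_apply_sub_smul_mem (B : Submodule K V) (hB : B ≠ ⊤)
    (S : Set (Module.End K V)) (hS : ∀ f ∈ S, ∀ g ∈ S, Commute f g)
    (hBS : ∀ f ∈ S, ∀ b ∈ B, f b ∈ B) :
    ∃ v ∉ B, ∀ f ∈ S, ∃ μ : K, f v - μ • v ∈ B := by
  let S' : Set (Module.End K (V ⧸ B)) :=
    {g | ∃ f ∈ S, ∀ x, g (B.mkQ x) = B.mkQ (f x)}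
  have hS' : ∀ g ∈ S', ∀ g' ∈ S', Commute g g' := by
    rintro g ⟨f, hf, hg⟩ g' ⟨f', hf', hg'⟩
    refine B.linearMap_qext (LinearMap.ext fun x => ?_)
    simp only [LinearMap.comp_apply, Module.End.mul_apply, hg, hg']
    rw [← Module.End.mul_apply, hS f hf f' hf', Module.End.mul_apply]
  have : Nontrivial (V ⧸ B) := Submodule.Quotient.nontrivial_iff.mpr hB
  obtain ⟨v', -, hv0, hv'⟩ := exists_common_eigenvector_mem S' hS' ⊤ top_ne_bot
    fun _ _ _ _ => Submodule.mem_top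
  obtain ⟨v, rfl⟩ := B.mkQ_surjective v'
  refine ⟨v, fun hv => hv0 ((Submodule.Quotient.mk_eq_zero B).mpr hv), fun f hf => ?_⟩
  obtain ⟨μ, hμ⟩ := hv' (B.mapQ B f (hBS f hf)) ⟨f, hf, fun _ => rfl⟩
  exact ⟨μ, (Submodule.Quotient.eq B).mp (by simpa using hμ)⟩

end CommonEigenvector

lemma apply₂_mem_of_mem_sup_span_singleton {M N : Type*} [AddCommGroup M] [Module F M]
    [AddCommGroup N] [Module F N] (f : M →ₗ[F] M →ₗ[F] N) {B : Submodule F M}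
    {C : Submodule F N} {v : M} (hBB : ∀ b ∈ B, ∀ b' ∈ B, f b b' ∈ C)
    (hBv : ∀ b ∈ B, f b v ∈ C) (hvB : ∀ b ∈ B, f v b ∈ C) (hvv : f v v ∈ C)
    {p q : M} (hp : p ∈ B ⊔ F ∙ v) (hq : q ∈ B ⊔ F ∙ v) : f p q ∈ C := by
  obtain ⟨b, hb, _, hsv, rfl⟩ := Submodule.mem_sup.mp hp
  obtain ⟨b', hb', _, htv, rfl⟩ := Submodule.mem_sup.mp hq
  obtain ⟨s, rfl⟩ := Submodule.mem_span_singleton.mp hsv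
  obtain ⟨t, rfl⟩ := Submodule.mem_span_singleton.mp htv
  simp only [map_add, map_smul, LinearMap.add_apply, LinearMap.smul_apply]
  exact C.add_mem (C.add_mem (hBB b hb b' hb') (C.smul_mem s (hvB b' hb')))
    (C.smul_mem t (C.add_mem (hBv b hb) (C.smul_mem s hvv)))

lemma prodSpan_le_iff (f : P →ₗ[F] P →ₗ[F] P) (A B C : Submodule F P) :
    prodSpan f A B ≤ C ↔ ∀ a ∈ A, ∀ b ∈ B, f a b ∈ C := by
  refine Submodule.span_le.trans ⟨fun h a ha b hb => h ⟨a, ha, b, hb, rfl⟩, ?_⟩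
  rintro h _ ⟨a, ha, b, hb, rfl⟩
  exact h a ha b hb

lemma derSeries_succ_le_iff (mul br : P →ₗ[F] P →ₗ[F] P) (k : ℕ) (C : Submodule F P) :
    derSeries mul br (k + 1) ≤ C ↔
      ∀ x ∈ derSeries mul br k, ∀ y ∈ derSeries mul br k, mul x y ∈ C ∧ br x y ∈ C := by
  simp only [derSeries, sup_le_iff, prodSpan_le_iff, imp_and, forall_and]

section Poisson

variable {mul br : P →ₗ[F] P →ₗ[F] P} {B : Submodule F P}

lemma br_skew (hskew : ∀ x, br x x = 0) (x y : P) : br x y = -br y x := by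
  have h := hskew (x + y)
  simp only [map_add, LinearMap.add_apply, hskew, zero_add, add_zero] at h
  exact eq_neg_of_add_eq_zero_right h

variable (mul br B) in
def idealizer : Submodule F P where
  carrier := {p | ∀ b ∈ B, mul b p ∈ B ∧ br b p ∈ B}
  add_mem' hp hq b hb := by
    simp only [map_add]
    exact ⟨B.add_mem (hp b hb).1 (hq b hb).1, B.add_mem (hp b hb).2 (hq b hb).2⟩
  zero_mem' b _ := by simp only [map_zero, B.zero_mem, and_self]
  smul_mem' t p hp b hb := by
    simp only [map_smul]
    exact ⟨B.smul_mem t (hp b hb).1, B.smul_mem t (hp b hb).2⟩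

lemma mem_idealizer {p : P} : p ∈ idealizer mul br B ↔ ∀ b ∈ B, mul b p ∈ B ∧ br b p ∈ B :=
  Iff.rfl

lemma le_idealizer (hB : IsSubalg mul br B) : B ≤ idealizer mul br B :=
  fun _ hp b hb => hB b hb _ hp

lemma isSubalg_idealizer (hcomm : ∀ x y, mul x y = mul y x)
    (hassoc : ∀ x y z, mul (mul x y) z = mul x (mul y z)) (hskew : ∀ x, br x x = 0)
    (hjac : ∀ x y z, br (br x y) z + br (br y z) x + br (br z x) y = 0)
    (hleib : ∀ x y z, br (mul x y) z = mul (br x z) y + mul x (br y z)) :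
    IsSubalg mul br (idealizer mul br B) := by
  intro p hp q hq
  rw [mem_idealizer] at hp hq ⊢
  have hpb : ∀ b ∈ B, br p b ∈ B := fun b hb => by
    rw [br_skew hskew]; exact B.neg_mem (hp b hb).2
  have hqb : ∀ b ∈ B, br q b ∈ B := fun b hb => by
    rw [br_skew hskew]; exact B.neg_mem (hq b hb).2
  refine ⟨fun b hb => ⟨?_, ?_⟩, fun b hb => ⟨?_, ?_⟩⟩
  · rw [← hassoc]
    exact (hq _ (hp b hb).1).1
  · rw [br_skew hskew, hleib, hcomm p]
    exact B.neg_mem (B.add_mem (hq _ (hpb b hb)).1 (hp _ (hqb b hb)).1)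
  · have h : mul b (br q p) = br (mul b q) p - mul (br b p) q := by
      rw [hleib]; abel
    rw [br_skew hskew p, map_neg, h]
    exact B.neg_mem (B.sub_mem (hp _ (hq b hb).1).2 (hq _ (hp b hb).2).1)
  · have h : br b (br p q) = br (br b p) q + br (br q b) p := by
      rw [br_skew hskew b]
      linear_combination (norm := module) -hjac b p q
    rw [h]
    exact B.add_mem (hq _ (hp b hb).2).2 (hp _ (hqb b hb)).2

lemma isIdeal_of_idealizer_eq_top (hcomm : ∀ x y, mul x y = mul y x)
    (hskew : ∀ x, br x x = 0) (hN : idealizer mul br B = ⊤) : IsIdeal mul br B := by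
  intro b hb p
  obtain ⟨hmul, hbr⟩ := mem_idealizer.mp (hN ▸ Submodule.mem_top : p ∈ idealizer mul br B) b hb
  exact ⟨hmul, hcomm p b ▸ hmul, hbr, br_skew hskew p b ▸ B.neg_mem hbr⟩

lemma mul_br_mem_of_isIdeal_of_mem_sup_span_singleton (hskew : ∀ x, br x x = 0)
    (hI : IsIdeal mul br B) {C : Submodule F P} (hBC : B ≤ C) {y p q : P} (hyy : mul y y ∈ C)
    (hp : p ∈ B ⊔ F ∙ y) (hq : q ∈ B ⊔ F ∙ y) : mul p q ∈ C ∧ br p q ∈ C :=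
  ⟨apply₂_mem_of_mem_sup_span_singleton mul (fun b hb _ _ => hBC (hI b hb _).1)
      (fun b hb => hBC (hI b hb y).1) (fun b hb => hBC (hI b hb y).2.1) hyy hp hq,
    apply₂_mem_of_mem_sup_span_singleton br (fun b hb _ _ => hBC (hI b hb _).2.2.1)
      (fun b hb => hBC (hI b hb y).2.2.1) (fun b hb => hBC (hI b hb y).2.2.2)
      (hskew y ▸ C.zero_mem) hp hq⟩

lemma exists_mul_self_sub_smul_mem [IsAlgClosed F] [FiniteDimensional F P]
    (hcomm : ∀ x y, mul x y = mul y x) (hassoc : ∀ x y z, mul (mul x y) z = mul x (mul y z))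
    (hI : IsIdeal mul br B) (hne : B ≠ ⊤) : ∃ y ∉ B, ∃ c : F, mul y y - c • y ∈ B := by
  have hS : ∀ f ∈ Set.range mul, ∀ g ∈ Set.range mul, Commute f g := by
    rintro _ ⟨p, rfl⟩ _ ⟨q, rfl⟩
    refine LinearMap.ext fun x => ?_
    simp only [Module.End.mul_apply]
    rw [← hassoc, hcomm p q, hassoc]
  obtain ⟨y, hyB, hy⟩ := exists_notMem_forall_apply_sub_smul_mem B hne (Set.range mul) hS
    (by rintro _ ⟨p, rfl⟩ b hb; exact (hI b hb p).2.1)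
  exact ⟨y, hyB, hy _ ⟨y, rfl⟩⟩

lemma br_eq_zero_of_mul_self_sub_smul_mem (hcomm : ∀ x y, mul x y = mul y x)
    (hassoc : ∀ x y z, mul (mul x y) z = mul x (mul y z))
    (hleib : ∀ x y z, br (mul x y) z = mul (br x z) y + mul x (br y z))
    (hI : IsIdeal mul br B) (hab : IsAbelian mul br B) {y : P} {c : F} (hc : c ≠ 0)
    (hyy : mul y y - c • y ∈ B) {b : P} (hb : b ∈ B) : br y b = 0 := by
  set s := mul y y - c • y
  have hyy' : mul y y = c • y + s := by simp only [s, add_sub_cancel]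
  set u := br y b
  have hu : u ∈ B := (hI b hb y).2.2.2
  have hcu : c • u = mul u y + mul u y := by
    have h := hleib y y b
    rwa [hyy', map_add, LinearMap.add_apply, map_smul, LinearMap.smul_apply,
      (hab s hyy b hb).2, add_zero, hcomm y u] at h
  have huyy : mul (mul u y) y = c • mul u y := by
    rw [hassoc, hyy', map_add, map_smul, (hab u hu s hyy).1, add_zero]
  have huy : mul u y = 0 := by
    have h := congrArg (mul · y) hcu
    simp only [map_smul, map_add, LinearMap.smul_apply, LinearMap.add_apply, huyy] at h
    exact (smul_eq_zero.mp (left_eq_add.mp h)).resolve_left hc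
  rw [huy, add_zero] at hcu
  exact (smul_eq_zero.mp hcu).resolve_left hc

lemma mul_br_mem_of_isIdeal_of_isAbelian [IsAlgClosed F] [FiniteDimensional F P]
    (hbr_ne : br ≠ 0) (hcomm : ∀ x y, mul x y = mul y x)
    (hassoc : ∀ x y z, mul (mul x y) z = mul x (mul y z)) (hskew : ∀ x, br x x = 0)
    (hleib : ∀ x y z, br (mul x y) z = mul (br x z) y + mul x (br y z))
    (hI : IsIdeal mul br B) (hab : IsAbelian mul br B) (hne : B ≠ ⊤)
    (hmax : ∀ C : Submodule F P, IsSubalg mul br C → B < C → C = ⊤) (p q : P) :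
    mul p q ∈ B ∧ br p q ∈ B := by
  obtain ⟨y, hyB, c, hc⟩ := exists_mul_self_sub_smul_mem hcomm hassoc hI hne
  have hyy : mul y y ∈ B ⊔ F ∙ y := by
    simpa using (B ⊔ F ∙ y).add_mem (Submodule.mem_sup_left hc)
      (Submodule.mem_sup_right (Submodule.smul_mem _ c (Submodule.mem_span_singleton_self y)))
  have htop : B ⊔ F ∙ y = ⊤ := hmax _
    (fun p hp q hq =>
      mul_br_mem_of_isIdeal_of_mem_sup_span_singleton hskew hI le_sup_left hyy hp hq)
    (Submodule.lt_sup_iff_notMem.mpr hyB)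
  have hmem : ∀ p, p ∈ B ⊔ F ∙ y := fun p => htop ▸ Submodule.mem_top
  have hc0 : c = 0 := by
    by_contra hc0
    have hyb : ∀ b ∈ B, br y b = 0 := fun b hb =>
      br_eq_zero_of_mul_self_sub_smul_mem hcomm hassoc hleib hI hab hc0 hc hb
    refine hbr_ne (LinearMap.ext₂ fun p q => (Submodule.mem_bot F).mp ?_)
    refine apply₂_mem_of_mem_sup_span_singleton br (fun b hb b' hb' => ?_) (fun b hb => ?_)
      (fun b hb => ?_) ?_ (hmem p) (hmem q)
    · simp [(hab b hb b' hb').2]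
    · simp [br_skew hskew b, hyb b hb]
    · simp [hyb b hb]
    · simp [hskew]
  rw [hc0, zero_smul, sub_zero] at hc
  exact mul_br_mem_of_isIdeal_of_mem_sup_span_singleton hskew hI le_rfl hc (hmem p) (hmem q)

lemma apply_mem_of_apply_sub_smul_mem_of_apply_apply_eq_zero {M : Type*} [AddCommGroup M]
    [Module F M] {B : Submodule F M} {f : Module.End F M} (hBf : ∀ b ∈ B, f b ∈ B) {v : M}
    (hv : v ∉ B) {μ : F} (hμ : f v - μ • v ∈ B) (hff : f (f v) = 0) : f v ∈ B := by
  have hμf : μ • f v ∈ B := by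
    simpa [hff] using B.neg_mem (hBf _ hμ)
  have hμ0 : μ = 0 := by
    by_contra hμ0
    refine hv ((B.smul_mem_iff (mul_ne_zero hμ0 hμ0)).mp ?_)
    simpa [smul_sub, smul_smul] using B.sub_mem hμf (B.smul_mem μ hμ)
  simpa [hμ0] using hμ

lemma exists_notMem_mul_mem_br_sub_smul_mem [IsAlgClosed F] [FiniteDimensional F P]
    (hcomm : ∀ x y, mul x y = mul y x) (hassoc : ∀ x y z, mul (mul x y) z = mul x (mul y z))
    (hskew : ∀ x, br x x = 0)
    (hjac : ∀ x y z, br (br x y) z + br (br y z) x + br (br z x) y = 0)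
    (hleib : ∀ x y z, br (mul x y) z = mul (br x z) y + mul x (br y z))
    (hab : IsAbelian mul br B) (hne : B ≠ ⊤) :
    ∃ v ∉ B, ∀ b ∈ B, mul b v ∈ B ∧ ∃ c : F, br v b - c • v ∈ B := by
  let S : Set (Module.End F P) :=
    Set.range (fun b : B => mul b) ∪ Set.range (fun b : B => br.flip b)
  have hLL : ∀ b b' : P, Commute (mul b) (mul b') := fun b b' => LinearMap.ext fun x => by
    simp only [Module.End.mul_apply]
    rw [← hassoc, hcomm b b', hassoc]
  have hLR : ∀ b ∈ B, ∀ b' ∈ B, Commute (mul b) (br.flip b') := fun b hb b' hb' =>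
    LinearMap.ext fun x => by
      simp only [Module.End.mul_apply, LinearMap.flip_apply]
      rw [hleib, (hab b hb b' hb').2, LinearMap.map_zero₂, zero_add]
  have hRR : ∀ b ∈ B, ∀ b' ∈ B, Commute (br.flip b) (br.flip b') := fun b hb b' hb' =>
    LinearMap.ext fun x => by
      simp only [Module.End.mul_apply, LinearMap.flip_apply]
      have h := hjac x b' b
      rw [(hab b' hb' b hb).2, LinearMap.map_zero₂, add_zero, br_skew hskew b x, map_neg,
        LinearMap.neg_apply, ← sub_eq_add_neg, sub_eq_zero] at h
      exact h
  have hS : ∀ f ∈ S, ∀ g ∈ S, Commute f g := by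
    rintro _ (⟨b, rfl⟩ | ⟨b, rfl⟩) _ (⟨b', rfl⟩ | ⟨b', rfl⟩)
    · exact hLL b b'
    · exact hLR b b.2 b' b'.2
    · exact (hLR b' b'.2 b b.2).symm
    · exact hRR b b.2 b' b'.2
  have hBS : ∀ f ∈ S, ∀ b ∈ B, f b ∈ B := by
    rintro _ (⟨b, rfl⟩ | ⟨b, rfl⟩) b' hb'
    · simp [(hab b b.2 b' hb').1]
    · simp [(hab b' hb' b b.2).2]
  obtain ⟨v, hvB, hv⟩ := exists_notMem_forall_apply_sub_smul_mem B hne S hS hBS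
  refine ⟨v, hvB, fun b hb => ⟨?_, hv _ (Or.inr ⟨⟨b, hb⟩, rfl⟩)⟩⟩
  obtain ⟨μ, hμ⟩ := hv _ (Or.inl ⟨⟨b, hb⟩, rfl⟩)
  -- left multiplication by `b` squares to zero, so its eigenvalue is `0`
  refine apply_mem_of_apply_sub_smul_mem_of_apply_apply_eq_zero (hBS _ (Or.inl ⟨⟨b, hb⟩, rfl⟩))
    hvB hμ ?_
  show mul b (mul b v) = 0
  rw [← hassoc, (hab b hb b hb).1, LinearMap.map_zero₂]

lemma mul_apply_eq_zero_of_br_sub_smul_mem (hskew : ∀ x, br x x = 0)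
    (hleib : ∀ x y z, br (mul x y) z = mul (br x z) y + mul x (br y z))
    (hab : IsAbelian mul br B) {v b₀ : P} {c₀ : F} (hb₀ : b₀ ∈ B) (hc₀ : c₀ ≠ 0)
    (hvb₀ : br v b₀ - c₀ • v ∈ B) (hBv : ∀ b ∈ B, mul b v ∈ B) :
    (∀ b ∈ B, mul b v = 0) ∧ mul v v = 0 := by
  set s := br v b₀ - c₀ • v
  have hbr : br v b₀ = c₀ • v + s := by simp only [s, add_sub_cancel]
  have hBv0 : ∀ b ∈ B, mul b v = 0 := by
    intro b hb
    have h := hleib b v b₀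
    rw [(hab _ (hBv b hb) _ hb₀).2, (hab _ hb _ hb₀).2, LinearMap.map_zero₂, zero_add, hbr,
      map_add, map_smul, (hab _ hb _ hvb₀).1, add_zero] at h
    exact (smul_eq_zero.mp h.symm).resolve_left hc₀
  refine ⟨hBv0, ?_⟩
  have h := hleib b₀ v v
  rw [hBv0 b₀ hb₀, hskew, br_skew hskew b₀, hbr] at h
  simp only [map_zero, LinearMap.zero_apply, map_neg, map_add, map_smul, LinearMap.neg_apply,
    LinearMap.add_apply, LinearMap.smul_apply, hBv0 s hvb₀, add_zero] at h
  exact (smul_eq_zero.mp (neg_eq_zero.mp h.symm)).resolve_left hc₀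

lemma mul_eq_zero_of_idealizer_eq_self [IsAlgClosed F] [FiniteDimensional F P]
    (hcomm : ∀ x y, mul x y = mul y x) (hassoc : ∀ x y z, mul (mul x y) z = mul x (mul y z))
    (hskew : ∀ x, br x x = 0)
    (hjac : ∀ x y z, br (br x y) z + br (br y z) x + br (br z x) y = 0)
    (hleib : ∀ x y z, br (mul x y) z = mul (br x z) y + mul x (br y z))
    (hab : IsAbelian mul br B) (hne : B ≠ ⊤)
    (hmax : ∀ C : Submodule F P, IsSubalg mul br C → B < C → C = ⊤)
    (hN : idealizer mul br B = B) : mul = 0 := by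
  obtain ⟨v, hvB, hv⟩ :=
    exists_notMem_mul_mem_br_sub_smul_mem hcomm hassoc hskew hjac hleib hab hne
  have hBv : ∀ b ∈ B, mul b v ∈ B := fun b hb => (hv b hb).1
  obtain ⟨b₀, hb₀, hvb₀⟩ : ∃ b₀ ∈ B, br v b₀ ∉ B := by
    by_contra! h
    refine hvB (hN ▸ mem_idealizer.mpr fun b hb => ⟨hBv b hb, ?_⟩)
    rw [br_skew hskew]
    exact B.neg_mem (h b hb)
  obtain ⟨c₀, hc₀⟩ := (hv b₀ hb₀).2
  have hc₀0 : c₀ ≠ 0 := by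
    rintro rfl
    exact hvb₀ (by simpa using hc₀)
  obtain ⟨hBv0, hvv⟩ := mul_apply_eq_zero_of_br_sub_smul_mem hskew hleib hab hb₀ hc₀0 hc₀ hBv
  have hmul : ∀ {p q}, p ∈ B ⊔ F ∙ v → q ∈ B ⊔ F ∙ v → mul p q = 0 := fun hp hq =>
    (Submodule.mem_bot F).mp <| apply₂_mem_of_mem_sup_span_singleton mul
      (fun b hb b' hb' => by simp [(hab b hb b' hb').1]) (fun b hb => by simp [hBv0 b hb])
      (fun b hb => by simp [hcomm v b, hBv0 b hb]) (by simp [hvv]) hp hq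
  have hbrv : ∀ b ∈ B, br v b ∈ B ⊔ F ∙ v := fun b hb => by
    obtain ⟨c, hc⟩ := (hv b hb).2
    simpa using (B ⊔ F ∙ v).add_mem (Submodule.mem_sup_left hc)
      (Submodule.mem_sup_right (Submodule.smul_mem _ c (Submodule.mem_span_singleton_self v)))
  have hsub : IsSubalg mul br (B ⊔ F ∙ v) := fun p hp q hq =>
    ⟨hmul hp hq ▸ Submodule.zero_mem _, apply₂_mem_of_mem_sup_span_singleton br
      (fun b hb b' hb' => by simp [(hab b hb b' hb').2])
      (fun b hb => br_skew hskew b v ▸ Submodule.neg_mem _ (hbrv b hb)) hbrv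
      (by simp [hskew]) hp hq⟩
  have htop : B ⊔ F ∙ v = ⊤ := hmax _ hsub (Submodule.lt_sup_iff_notMem.mpr hvB)
  exact LinearMap.ext₂ fun p q => hmul (htop ▸ Submodule.mem_top) (htop ▸ Submodule.mem_top)

end Poisson

/-- If a non-trivial Poisson algebra over an algebraically closed field has a
maximal subalgebra `B` which is abelian, then `P^1) ⊆ B`, `P` is solvable and
`P^2) = 0`. -/
theorem twoStepSolvable_of_maximal_abelian [IsAlgClosed F] [FiniteDimensional F P]
    (mul br : P →ₗ[F] P →ₗ[F] P)
    (hmul_ne : mul ≠ 0) (hbr_ne : br ≠ 0)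
    (hcomm : ∀ x y, mul x y = mul y x)
    (hassoc : ∀ x y z, mul (mul x y) z = mul x (mul y z))
    (hskew : ∀ x, br x x = 0)
    (hjac : ∀ x y z, br (br x y) z + br (br y z) x + br (br z x) y = 0)
    (hleib : ∀ x y z, br (mul x y) z = mul (br x z) y + mul x (br y z))
    (B : Submodule F P) (hB : IsSubalg mul br B) (hne : B ≠ ⊤)
    (hmax : ∀ C : Submodule F P, IsSubalg mul br C → B < C → C = ⊤)
    (hab : IsAbelian mul br B) :
    derSeries mul br 1 ≤ B ∧ (∃ m, derSeries mul br m = ⊥) ∧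
      derSeries mul br 2 = ⊥ := by
  have hPB : ∀ p q, mul p q ∈ B ∧ br p q ∈ B := by
    rcases (le_idealizer hB).eq_or_lt with hN | hN
    · exact absurd (mul_eq_zero_of_idealizer_eq_self hcomm hassoc hskew hjac hleib hab hne
        hmax hN.symm) hmul_ne
    · have hI : IsIdeal mul br B := isIdeal_of_idealizer_eq_top hcomm hskew
        (hmax _ (isSubalg_idealizer hcomm hassoc hskew hjac hleib) hN)
      exact mul_br_mem_of_isIdeal_of_isAbelian hbr_ne hcomm hassoc hskew hleib hI hab hne hmax
  have h1 : derSeries mul br 1 ≤ B :=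
    (derSeries_succ_le_iff mul br 0 B).mpr fun p _ q _ => hPB p q
  have h2 : derSeries mul br 2 = ⊥ := eq_bot_iff.mpr <|
    (derSeries_succ_le_iff mul br 1 ⊥).mpr fun p hp q hq => by
      simp [(hab p (h1 hp) q (h1 hq)).1, (hab p (h1 hp) q (h1 hq)).2]
  exact ⟨h1, ⟨2, h2⟩, h2⟩
end

section
/- Let P be a Poisson algebra of dimension n over an arbitrary field, and let A be an abelian subalgebra of codimension two in P. Then A is a maximal subalgebra of P if and only if A is a maximal subalgebra of the Lie algebra P_L (P with only the bracket). -/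
/-!
A Poisson subalgebra is a Lie subalgebra, so only one direction needs work: given a Lie
subalgebra `A < B < P`, we produce a Poisson subalgebra strictly between `A` and `P`. By
codimension, `B = A + F b`, and `C = A + F x` (with `x ∉ A`) is a Poisson subalgebra as soon
as `x A`, `[x, A]` and `x²` lie in `C`.

If `u a₀ ∉ A` for some `u` and `a₀ ∈ A`, take `x = u a₀`: then `x A = 0`, `x² = 0`, and the
Leibniz rule gives `[x, a] a₀ = 0`; the proper subspace `{w | w a₀ ∈ A}` contains `A + F x`,
hence equals it, so `[x, a] ∈ C`.

Otherwise `A` is an ideal for the product, `P / A` is a two-dimensional commutative algebra and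
each `ad a` (`a ∈ A`) induces a derivation of it having `b̄` as an eigenvector, with eigenvalue
`μ` say. If `b² ∈ B`, then `C = B` works. Otherwise `b̄, b̄²` is a basis of `P / A`, say
`b̄³ = α b̄ + β b̄²`. Then `v = b² - β b` satisfies `v̄² = α v̄`, and comparing eigenvalues in the
cubic relation gives `β μ = 0`, which makes `v̄` an eigenvector of `ad a` as well.
-/

variable {F : Type*} [Field F] {P : Type*} [AddCommGroup P] [Module F P]

/-- A subalgebra of the underlying Lie algebra (closed under the bracket only). -/
def IsSubalgL (br : P →ₗ[F] P →ₗ[F] P) (A : Submodule F P) : Prop :=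
  ∀ x ∈ A, ∀ y ∈ A, br x y ∈ A

open Module Submodule

theorem Submodule.mem_sup_span_singleton_iff {R M : Type*} [Ring R] [AddCommGroup M] [Module R M]
    {S : Submodule R M} {x y : M} :
    y ∈ S ⊔ span R {x} ↔ ∃ c : R, y - c • x ∈ S := by
  simp only [mem_sup, mem_span_singleton]
  constructor
  · rintro ⟨s, hs, _, ⟨c, rfl⟩, rfl⟩
    exact ⟨c, by simpa using hs⟩
  · rintro ⟨c, hc⟩
    exact ⟨_, hc, _, ⟨c, rfl⟩, sub_add_cancel _ _⟩

theorem LinearMap.apply_mem_of_mem_sup_span_singleton {R M N : Type*} [CommSemiring R]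
    [AddCommMonoid M] [Module R M] [AddCommMonoid N] [Module R N] (f : M →ₗ[R] M →ₗ[R] N)
    {S : Submodule R M} {C : Submodule R N} {x : M}
    (hS : ∀ a ∈ S, ∀ a' ∈ S, f a a' ∈ C) (hxS : ∀ a ∈ S, f x a ∈ C ∧ f a x ∈ C)
    (hxx : f x x ∈ C) : ∀ y ∈ S ⊔ span R {x}, ∀ z ∈ S ⊔ span R {x}, f y z ∈ C := by
  rw [← map₂_le]
  simp only [map₂_sup_left, map₂_sup_right, sup_le_iff, map₂_span_singleton_eq_map,
    map₂_span_singleton_eq_map_flip, map_le_iff_le_comap, span_singleton_le_iff_mem]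
  exact ⟨⟨map₂_le.2 hS, fun a ha ↦ (hxS a ha).1⟩, fun a ha ↦ (hxS a ha).2, hxx⟩

section Codimension

variable {K V : Type*} [DivisionRing K] [AddCommGroup V] [Module K V]

theorem Submodule.eq_zero_of_smul_add_smul_mem {S : Submodule K V} {x y : V} {c d : K}
    (hy : y ∉ S ⊔ span K {x}) (h : c • y + d • x ∈ S) : c = 0 := by
  by_contra hc
  refine hy (mem_sup_span_singleton_iff.2 ⟨-(c⁻¹ * d), ?_⟩)
  convert S.smul_mem c⁻¹ h using 1
  rw [smul_add, smul_smul, inv_mul_cancel₀ hc, one_smul, smul_smul, neg_smul, sub_neg_eq_add]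

variable [FiniteDimensional K V] {W : Submodule K V}

theorem Submodule.sup_span_singleton_eq_top_of_finrank_add_one
    (hW : finrank K W + 1 = finrank K V) {v : V} (hv : v ∉ W) : W ⊔ span K {v} = ⊤ :=
  eq_top_of_finrank_eq (by rw [finrank_sup_span_singleton hv, hW])

theorem Submodule.eq_of_finrank_add_one_of_le_of_ne_top (hW : finrank K W + 1 = finrank K V)
    {U : Submodule K V} (hWU : W ≤ U) (hU : U ≠ ⊤) : W = U :=
  eq_of_le_of_finrank_le hWU (by have := finrank_lt hU; omega)

end Codimension

section Poisson

variable {mul br : P →ₗ[F] P →ₗ[F] P} {A : Submodule F P}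

theorem IsAbelian.isSubalg_sup_span_singleton (hab : IsAbelian mul br A)
    (hcomm : ∀ x y, mul x y = mul y x) (hskew : ∀ x, br x x = 0) {x : P}
    (hmul : ∀ a ∈ A, mul x a ∈ A ⊔ span F {x}) (hbr : ∀ a ∈ A, br x a ∈ A ⊔ span F {x})
    (hsq : mul x x ∈ A ⊔ span F {x}) : IsSubalg mul br (A ⊔ span F {x}) := by
  have hzero {y} (hy : y = 0) : y ∈ A ⊔ span F {x} := hy ▸ zero_mem _
  intro y hy z hz
  constructor
  · refine mul.apply_mem_of_mem_sup_span_singleton (fun a ha a' ha' ↦ hzero (hab a ha a' ha').1)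
      (fun a ha ↦ ⟨hmul a ha, hcomm a x ▸ hmul a ha⟩) hsq y hy z hz
  · refine br.apply_mem_of_mem_sup_span_singleton (fun a ha a' ha' ↦ hzero (hab a ha a' ha').2)
      (fun a ha ↦ ⟨hbr a ha, ?_⟩) (hzero (hskew x)) y hy z hz
    rw [← LinearMap.IsAlt.neg hskew]
    exact neg_mem (hbr a ha)

theorem br_mul_sub_smul_mem (hideal : ∀ x, ∀ a ∈ A, mul x a ∈ A)
    (hcomm : ∀ x y, mul x y = mul y x)
    (hleib : ∀ x y z, br (mul x y) z = mul (br x z) y + mul x (br y z)) {a x y : P} {μ ν : F}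
    (hx : br x a - μ • x ∈ A) (hy : br y a - ν • y ∈ A) :
    br (mul x y) a - (μ + ν) • mul x y ∈ A := by
  have : br (mul x y) a - (μ + ν) • mul x y =
      mul y (br x a - μ • x) + mul x (br y a - ν • y) := by
    rw [hleib, hcomm (br x a), map_sub, map_sub, map_smul, map_smul, hcomm y x]
    module
  rw [this]
  exact add_mem (hideal _ _ hx) (hideal _ _ hy)

theorem IsAbelian.coeff_mul_eigenvalue_eq_zero (hab : IsAbelian mul br A)
    (hideal : ∀ x, ∀ a ∈ A, mul x a ∈ A) (hcomm : ∀ x y, mul x y = mul y x)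
    (hleib : ∀ x y z, br (mul x y) z = mul (br x z) y + mul x (br y z)) {a b a₂ : P} {α β μ : F}
    (ha : a ∈ A) (ha₂ : a₂ ∈ A) (hsq : mul b b ∉ A ⊔ span F {b})
    (hcube : mul b (mul b b) = a₂ + α • b + β • mul b b) (hμ : br b a - μ • b ∈ A) :
    β * μ = 0 := by
  have hsqμ := br_mul_sub_smul_mem hideal hcomm hleib hμ hμ
  have hcubeμ := br_mul_sub_smul_mem hideal hcomm hleib hμ hsqμ
  refine eq_zero_of_smul_add_smul_mem hsq (d := 2 * α * μ) ?_
  -- `ad a` on the cubic relation: `b`, `b²`, `b³` have eigenvalues `μ`, `2μ`, `3μ` modulo `A`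
  convert sub_mem (sub_mem (add_mem (smul_mem _ α hμ) (smul_mem _ β hsqμ)) hcubeμ)
    (smul_mem _ (3 * μ) ha₂) using 1
  rw [hcube]
  simp only [map_add, map_smul, LinearMap.add_apply, LinearMap.smul_apply, (hab a₂ ha₂ a ha).2]
  module

variable [FiniteDimensional F P]

theorem exists_isSubalg_of_sup_span_singleton (hdim : finrank F A + 2 = finrank F P) {x : P}
    (hx : x ∉ A) (hC : IsSubalg mul br (A ⊔ span F {x})) :
    ∃ C, IsSubalg mul br C ∧ A < C ∧ C ≠ ⊤ := by
  refine ⟨_, hC, left_lt_sup.2 (by rwa [span_singleton_le_iff_mem]), fun htop ↦ ?_⟩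
  have := finrank_sup_span_singleton hx
  rw [htop, finrank_top] at this
  omega

theorem IsAbelian.exists_isSubalg_of_mul_notMem (hab : IsAbelian mul br A)
    (hcomm : ∀ x y, mul x y = mul y x) (hassoc : ∀ x y z, mul (mul x y) z = mul x (mul y z))
    (hskew : ∀ x, br x x = 0) (hleib : ∀ x y z, br (mul x y) z = mul (br x z) y + mul x (br y z))
    (hdim : finrank F A + 2 = finrank F P) {u a₀ : P} (ha₀ : a₀ ∈ A) (hu : mul u a₀ ∉ A) :
    ∃ C, IsSubalg mul br C ∧ A < C ∧ C ≠ ⊤ := by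
  have hann : ∀ a ∈ A, mul (mul u a₀) a = 0 := fun a ha ↦ by
    rw [hassoc, (hab a₀ ha₀ a ha).1, map_zero]
  have hK : A ⊔ span F {mul u a₀} = A.comap (mul.flip a₀) := by
    refine eq_of_finrank_add_one_of_le_of_ne_top (by rw [finrank_sup_span_singleton hu]; omega)
      (sup_le ?_ ?_) ?_
    · intro a ha
      simp [(hab a ha a₀ ha₀).1]
    · simp [span_singleton_le_iff_mem, hann a₀ ha₀]
    · exact fun htop ↦ hu (htop ▸ mem_top : u ∈ A.comap (mul.flip a₀))
  refine exists_isSubalg_of_sup_span_singleton hdim hu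
    (hab.isSubalg_sup_span_singleton hcomm hskew (fun a ha ↦ ?_) (fun a ha ↦ ?_) ?_)
  · rw [hann a ha]
    exact zero_mem _
  · have := hleib (mul u a₀) a₀ a
    rw [hann a₀ ha₀, (hab a₀ ha₀ a ha).2, map_zero, map_zero, LinearMap.zero_apply,
      add_zero] at this
    rw [hK, mem_comap, LinearMap.flip_apply, ← this]
    exact zero_mem _
  · rw [hcomm u a₀, ← hassoc, hcomm a₀ u, hann a₀ ha₀, map_zero, LinearMap.zero_apply]
    exact zero_mem _

theorem IsAbelian.exists_isSubalg_of_mul_sq_notMem (hab : IsAbelian mul br A)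
    (hcomm : ∀ x y, mul x y = mul y x) (hassoc : ∀ x y z, mul (mul x y) z = mul x (mul y z))
    (hskew : ∀ x, br x x = 0) (hleib : ∀ x y z, br (mul x y) z = mul (br x z) y + mul x (br y z))
    (hdim : finrank F A + 2 = finrank F P) (hideal : ∀ x, ∀ a ∈ A, mul x a ∈ A) {b : P}
    (hb : b ∉ A) (hbr : ∀ a ∈ A, br b a ∈ A ⊔ span F {b}) (hsq : mul b b ∉ A ⊔ span F {b}) :
    ∃ C, IsSubalg mul br C ∧ A < C ∧ C ≠ ⊤ := by
  obtain ⟨a₂, ha₂, α, β, hcube⟩ :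
      ∃ a₂ ∈ A, ∃ α β : F, mul b (mul b b) = a₂ + α • b + β • mul b b := by
    have htop := sup_span_singleton_eq_top_of_finrank_add_one
      (by rw [finrank_sup_span_singleton hb]; omega) hsq
    obtain ⟨β, hβ⟩ := mem_sup_span_singleton_iff.1 (htop ▸ mem_top : mul b (mul b b) ∈ _)
    obtain ⟨α, hα⟩ := mem_sup_span_singleton_iff.1 hβ
    exact ⟨_, hα, α, β, by abel⟩
  set v := mul b b - β • b with hv
  have hvA : v ∉ A := fun h ↦ hsq (mem_sup_span_singleton_iff.2 ⟨β, h⟩)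
  have hvv : mul v v - α • v ∈ A := by
    have : mul v v - α • v = mul b a₂ - β • a₂ := by
      simp only [hv, map_sub, map_smul, LinearMap.sub_apply, LinearMap.smul_apply]
      rw [hcomm (mul b b) b, hassoc, hcube]
      simp only [map_add, map_smul]
      rw [hcube]
      module
    rw [this]
    exact sub_mem (hideal b a₂ ha₂) (smul_mem _ _ ha₂)
  have hvbr : ∀ a ∈ A, ∃ c : F, br v a - c • v ∈ A := by
    intro a ha
    obtain ⟨μ, hμ⟩ := mem_sup_span_singleton_iff.1 (hbr a ha)
    have hβμ := hab.coeff_mul_eigenvalue_eq_zero hideal hcomm hleib ha ha₂ hsq hcube hμ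
    refine ⟨μ + μ, ?_⟩
    convert sub_mem (br_mul_sub_smul_mem hideal hcomm hleib hμ hμ) (smul_mem _ β hμ) using 1
    simp only [hv, map_sub, map_smul, LinearMap.sub_apply, LinearMap.smul_apply]
    linear_combination (norm := module) hβμ • b
  refine exists_isSubalg_of_sup_span_singleton hdim hvA
    (hab.isSubalg_sup_span_singleton hcomm hskew (fun a ha ↦ mem_sup_left (hideal v a ha))
      (fun a ha ↦ mem_sup_span_singleton_iff.2 (hvbr a ha))
      (mem_sup_span_singleton_iff.2 ⟨α, hvv⟩))

theorem IsAbelian.exists_isSubalg_of_isSubalgL (hab : IsAbelian mul br A)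
    (hcomm : ∀ x y, mul x y = mul y x) (hassoc : ∀ x y z, mul (mul x y) z = mul x (mul y z))
    (hskew : ∀ x, br x x = 0) (hleib : ∀ x y z, br (mul x y) z = mul (br x z) y + mul x (br y z))
    (hdim : finrank F A + 2 = finrank F P) {B : Submodule F P} (hB : IsSubalgL br B) (hAB : A < B)
    (hBtop : B ≠ ⊤) : ∃ C, IsSubalg mul br C ∧ A < C ∧ C ≠ ⊤ := by
  by_cases hideal : ∀ x, ∀ a ∈ A, mul x a ∈ A
  · obtain ⟨b, hbB, hbA⟩ := SetLike.exists_of_lt hAB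
    have hBeq : A ⊔ span F {b} = B :=
      eq_of_finrank_add_one_of_le_of_ne_top (by rw [finrank_sup_span_singleton hbA]; omega)
        (sup_le hAB.le ((span_singleton_le_iff_mem _ _).2 hbB)) hBtop
    have hbr : ∀ a ∈ A, br b a ∈ A ⊔ span F {b} := fun a ha ↦ hBeq ▸ hB b hbB a (hAB.le ha)
    by_cases hsq : mul b b ∈ A ⊔ span F {b}
    · exact exists_isSubalg_of_sup_span_singleton hdim hbA
        (hab.isSubalg_sup_span_singleton hcomm hskew (fun a ha ↦ mem_sup_left (hideal b a ha))
          hbr hsq)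
    · exact hab.exists_isSubalg_of_mul_sq_notMem hcomm hassoc hskew hleib hdim hideal hbA hbr hsq
  · push Not at hideal
    obtain ⟨u, a₀, ha₀, hu⟩ := hideal
    exact hab.exists_isSubalg_of_mul_notMem hcomm hassoc hskew hleib hdim ha₀ hu

end Poisson

theorem maximal_iff_maximal_lie_general [FiniteDimensional F P]
    (mul br : P →ₗ[F] P →ₗ[F] P)
    (hcomm : ∀ x y, mul x y = mul y x)
    (hassoc : ∀ x y z, mul (mul x y) z = mul x (mul y z))
    (hskew : ∀ x, br x x = 0)
    (hleib : ∀ x y z, br (mul x y) z = mul (br x z) y + mul x (br y z))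
    (A : Submodule F P) (hab : IsAbelian mul br A)
    (hdim : Module.finrank F A + 2 = Module.finrank F P) :
    ((A ≠ ⊤ ∧ ∀ B : Submodule F P, IsSubalg mul br B → A < B → B = ⊤) ↔
     (A ≠ ⊤ ∧ ∀ B : Submodule F P, IsSubalgL br B → A < B → B = ⊤)) := by
  refine ⟨fun ⟨hA, hmax⟩ ↦ ⟨hA, fun B hB hAB ↦ ?_⟩, fun ⟨hA, hmax⟩ ↦ ⟨hA, fun B hB ↦ ?_⟩⟩
  · by_contra hBtop
    obtain ⟨C, hC, hAC, hCtop⟩ :=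
      hab.exists_isSubalg_of_isSubalgL hcomm hassoc hskew hleib hdim hB hAB hBtop
    exact hCtop (hmax C hC hAC)
  · exact hmax B fun x hx y hy ↦ (hB x hx y hy).2

/-- An abelian subalgebra of codimension two of a Poisson algebra is a maximal
subalgebra of `P` iff it is a maximal subalgebra of the Lie algebra `P_L`. -/
theorem maximal_iff_maximal_lie [FiniteDimensional F P]
    (mul br : P →ₗ[F] P →ₗ[F] P)
    (hcomm : ∀ x y, mul x y = mul y x)
    (hassoc : ∀ x y z, mul (mul x y) z = mul x (mul y z))
    (hskew : ∀ x, br x x = 0)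
    (hjac : ∀ x y z, br (br x y) z + br (br y z) x + br (br z x) y = 0)
    (hleib : ∀ x y z, br (mul x y) z = mul (br x z) y + mul x (br y z))
    (A : Submodule F P) (hab : IsAbelian mul br A)
    (hdim : Module.finrank F A + 2 = Module.finrank F P) :
    ((A ≠ ⊤ ∧ ∀ B : Submodule F P, IsSubalg mul br B → A < B → B = ⊤) ↔
     (A ≠ ⊤ ∧ ∀ B : Submodule F P, IsSubalgL br B → A < B → B = ⊤)) :=
  maximal_iff_maximal_lie_general mul br hcomm hassoc hskew hleib A hab hdim
end
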